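/- In the rank-3 spin chain H = Σᵢ (J_X XᵢXᵢ₊₁ + J_Y YᵢYᵢ₊₁ + J_Z ZᵢZᵢ₊₁ + h_X Xᵢ + h_Y Yᵢ + h_Z Zᵢ) with all |J_X|, |J_Y|, |J_Z| nonzero and pairwise distinct, there is no nonzero 1-support conserved quantity: if Q = Σᵢ (aᵢ Xᵢ + bᵢ Yᵢ + cᵢ Zᵢ) satisfies [Q,H]=0 then all aᵢ = bᵢ = cᵢ = 0. -/

import Mathlib

/-!
Test `[Q, H] = 0` against the two-site operator `T = P_i R_{i+1}` with `P`, `R` traceless: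
`tr (T [Q, H]) = tr ([T, Q] H) = 0`. As `Q` is a sum of one-site terms, `[T, Q]` again lives on the
sites `i, i + 1` with a traceless factor on each, and for `N ≥ 3` only the bond `(i, i + 1)` of `H`
survives the trace. Taking `P`, `R` to be two different Pauli matrices gives
`J_Z a_i = J_Y a_{i+1}` and `J_Y a_i = J_Z a_{i+1}`, so `(J_Y² - J_Z²) a_i = 0`; likewise for `b`, `c`.
-/

open Complex
open scoped Classical

noncomputable def σx : Matrix (Fin 2) (Fin 2) ℂ := !![0, 1; 1, 0]
noncomputable def σy : Matrix (Fin 2) (Fin 2) ℂ := !![0, -I; I, 0]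
noncomputable def σz : Matrix (Fin 2) (Fin 2) ℂ := !![1, 0; 0, -1]

/-- The single-site operator `M` acting on site `i` of a spin-1/2 chain of `N` sites
(tensored with the identity on all other sites). -/
noncomputable def pauliAt (N : ℕ) (i : Fin N) (M : Matrix (Fin 2) (Fin 2) ℂ) :
    Matrix (Fin N → Fin 2) (Fin N → Fin 2) ℂ :=
  fun f g => M (f i) (g i) * if ∀ j, j ≠ i → f j = g j then 1 else 0

local notation "M₂" => Matrix (Fin 2) (Fin 2) ℂ

noncomputable def pauliDot (a b c : ℝ) : M₂ := (a : ℂ) • σx + (b : ℂ) • σy + (c : ℂ) • σz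

section TensorOp

variable {ι κ R : Type*} [Fintype ι] [DecidableEq ι] [Fintype κ] [CommSemiring R]

def tensorOp (u : ι → Matrix κ κ R) : Matrix (ι → κ) (ι → κ) R :=
  Matrix.of fun f g => ∏ l, u l (f l) (g l)

lemma tensorOp_mul_tensorOp (u v : ι → Matrix κ κ R) :
    tensorOp u * tensorOp v = tensorOp (u * v) := by
  ext f g
  simp only [tensorOp, Matrix.mul_apply, Matrix.of_apply, Pi.mul_apply, Fintype.prod_sum,
    Finset.prod_mul_distrib]

lemma trace_tensorOp (u : ι → Matrix κ κ R) : (tensorOp u).trace = ∏ l, (u l).trace := by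
  simp only [Matrix.trace, Matrix.diag, tensorOp, Matrix.of_apply, Fintype.prod_sum]

end TensorOp

section PauliAt

variable {N : ℕ}

def onSite (i : Fin N) (A : M₂) : Fin N → M₂ := Function.update 1 i A

@[simp]
lemma onSite_apply (i l : Fin N) (A : M₂) : onSite i A l = if l = i then A else 1 := by
  simp [onSite, Function.update_apply]

lemma pauliAt_eq_tensorOp (i : Fin N) (A : M₂) : pauliAt N i A = tensorOp (onSite i A) := by
  ext f g
  rw [tensorOp, Matrix.of_apply, Fintype.prod_eq_mul_prod_compl i, onSite_apply, if_pos rfl]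
  have hoff : ∀ l ∈ ({i}ᶜ : Finset (Fin N)),
      onSite i A l (f l) (g l) = if f l = g l then 1 else 0 := by
    intro l hl
    rw [onSite_apply, if_neg (by simpa using hl), Matrix.one_apply]
  rw [Finset.prod_congr rfl hoff, Finset.prod_boole]
  simp [pauliAt]

lemma pauliAt_add (i : Fin N) (A B : M₂) :
    pauliAt N i (A + B) = pauliAt N i A + pauliAt N i B := by
  ext f g; simp only [pauliAt, Matrix.add_apply, add_mul]

lemma pauliAt_sub (i : Fin N) (A B : M₂) :
    pauliAt N i (A - B) = pauliAt N i A - pauliAt N i B := by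
  ext f g; simp only [pauliAt, Matrix.sub_apply, sub_mul]

lemma pauliAt_smul (i : Fin N) (z : ℂ) (A : M₂) :
    pauliAt N i (z • A) = z • pauliAt N i A := by
  ext f g; simp only [pauliAt, Matrix.smul_apply, smul_eq_mul, mul_assoc]

lemma pauliAt_mul_pauliAt (i j : Fin N) (A B : M₂) :
    pauliAt N i A * pauliAt N j B = tensorOp (onSite i A * onSite j B) := by
  rw [pauliAt_eq_tensorOp, pauliAt_eq_tensorOp, tensorOp_mul_tensorOp]

lemma pauliAt_mul_pauliAt_self (i : Fin N) (A B : M₂) :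
    pauliAt N i A * pauliAt N i B = pauliAt N i (A * B) := by
  rw [pauliAt_mul_pauliAt, onSite, onSite, ← Function.update_mul, one_mul, pauliAt_eq_tensorOp,
    onSite]

lemma pauliAt_commute {i j : Fin N} (hij : i ≠ j) (A B : M₂) :
    Commute (pauliAt N i A) (pauliAt N j B) := by
  rw [Commute, SemiconjBy, pauliAt_mul_pauliAt, pauliAt_mul_pauliAt]
  congr 1
  ext1 l
  simp only [Pi.mul_apply, onSite_apply]
  split_ifs <;> simp_all

lemma trace_pauliAt_mul_pauliAt {i j : Fin N} (hij : i ≠ j) (A B : M₂) :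
    (pauliAt N i A * pauliAt N j B).trace = A.trace * B.trace * 2 ^ (N - 2) := by
  have hj : j ∈ ({i}ᶜ : Finset (Fin N)) := by simpa using hij.symm
  have hrest : ∀ l ∈ ({i}ᶜ \ {j} : Finset (Fin N)), ((onSite i A * onSite j B) l).trace = 2 := by
    intro l hl
    simp only [Finset.mem_sdiff, Finset.mem_compl, Finset.mem_singleton] at hl
    simp [hl.1, hl.2, Matrix.trace_one]
  have hcard : ({i}ᶜ \ {j} : Finset (Fin N)).card = N - 2 := by
    rw [Finset.card_sdiff_of_subset (Finset.singleton_subset_iff.2 hj), Finset.card_compl]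
    simp only [Fintype.card_fin, Finset.card_singleton]
    omega
  rw [pauliAt_mul_pauliAt, trace_tensorOp, Fintype.prod_eq_mul_prod_compl i,
    Finset.prod_eq_mul_prod_sdiff_singleton_of_mem hj, Finset.prod_congr rfl hrest, Finset.prod_const,
    hcard]
  simp [hij, hij.symm, mul_assoc]

lemma pauliAt_mul_sum_sub_sum_mul (i : Fin N) (A : M₂) (q : Fin N → M₂) :
    pauliAt N i A * ∑ j, pauliAt N j (q j) - (∑ j, pauliAt N j (q j)) * pauliAt N i A =
      pauliAt N i (A * q i - q i * A) := by
  rw [Finset.mul_sum, Finset.sum_mul, ← Finset.sum_sub_distrib,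
    Finset.sum_eq_single i (fun j _ hji => by rw [(pauliAt_commute (Ne.symm hji) _ _).eq, sub_self])
      (by simp),
    pauliAt_mul_pauliAt_self, pauliAt_mul_pauliAt_self, pauliAt_sub]

lemma sum_smul_pauliAt_eq_sum_pauliAt_pauliDot (a b c : Fin N → ℝ) :
    ∑ i : Fin N, ((a i : ℂ) • pauliAt N i σx + (b i : ℂ) • pauliAt N i σy
        + (c i : ℂ) • pauliAt N i σz) = ∑ i, pauliAt N i (pauliDot (a i) (b i) (c i)) := by
  simp only [pauliDot, pauliAt_add, pauliAt_smul]

end PauliAt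

noncomputable def xyzHamiltonian (N : ℕ) [NeZero N] (JX JY JZ hX hY hZ : ℝ) :
    Matrix (Fin N → Fin 2) (Fin N → Fin 2) ℂ :=
  ∑ i : Fin N,
    ((JX : ℂ) • (pauliAt N i σx * pauliAt N (i + 1) σx)
      + (JY : ℂ) • (pauliAt N i σy * pauliAt N (i + 1) σy)
      + (JZ : ℂ) • (pauliAt N i σz * pauliAt N (i + 1) σz)
      + (hX : ℂ) • pauliAt N i σx + (hY : ℂ) • pauliAt N i σy
      + (hZ : ℂ) • pauliAt N i σz)

lemma trace_σx : σx.trace = 0 := by simp [σx, Matrix.trace_fin_two]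
lemma trace_σy : σy.trace = 0 := by simp [σy, Matrix.trace_fin_two]
lemma trace_σz : σz.trace = 0 := by simp [σz, Matrix.trace_fin_two]

noncomputable def bondPairing (JX JY JZ : ℝ) (A B : M₂) : ℂ :=
  JX * ((A * σx).trace * (B * σx).trace) + JY * ((A * σy).trace * (B * σy).trace)
    + JZ * ((A * σz).trace * (B * σz).trace)

-- `tr ([P_i R_{i+1}, Q] H) = 2 ^ (N - 2) * bondCommutatorTrace J q_i q_{i+1} P R`.
noncomputable def bondCommutatorTrace (JX JY JZ : ℝ) (q q' P R : M₂) : ℂ :=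
  bondPairing JX JY JZ (P * q - q * P) R + bondPairing JX JY JZ P (R * q' - q' * R)

lemma bondCommutatorTrace_pauliDot (JX JY JZ a b c a' b' c' : ℝ) :
    let F := bondCommutatorTrace JX JY JZ (pauliDot a b c) (pauliDot a' b' c')
    F σy σz = 8 * I * ((JY * a' : ℝ) - (JZ * a : ℝ)) ∧
    F σz σy = 8 * I * ((JY * a : ℝ) - (JZ * a' : ℝ)) ∧
    F σz σx = 8 * I * ((JZ * b' : ℝ) - (JX * b : ℝ)) ∧
    F σx σz = 8 * I * ((JZ * b : ℝ) - (JX * b' : ℝ)) ∧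
    F σx σy = 8 * I * ((JX * c' : ℝ) - (JY * c : ℝ)) ∧
    F σy σx = 8 * I * ((JX * c : ℝ) - (JY * c' : ℝ)) := by
  refine ⟨?_, ?_, ?_, ?_, ?_, ?_⟩ <;>
  · simp [bondCommutatorTrace, bondPairing, pauliDot, σx, σy, σz, Matrix.trace_fin_two]
    ring

section NearestNeighbour

variable {N : ℕ} [NeZero N]

lemma Fin.add_one_ne_self (hN : 2 ≤ N) (i : Fin N) : i + 1 ≠ i := by
  rw [Ne, add_eq_left, Fin.ext_iff, Fin.val_one', Fin.val_zero, Nat.mod_eq_of_lt (by omega)]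
  omega

lemma Fin.add_one_add_one_ne_self (hN : 3 ≤ N) (i : Fin N) : i + 1 + 1 ≠ i := by
  rw [Ne, add_assoc, add_eq_left, Fin.ext_iff, Fin.val_add, Fin.val_one', Fin.val_zero,
    Nat.mod_eq_of_lt (a := 1) (by omega), Nat.mod_eq_of_lt (by omega)]
  omega

lemma trace_pauliAt_pair_mul_pauliAt (hN : 2 ≤ N) {A B : M₂} (hA : A.trace = 0)
    (hB : B.trace = 0) (i k : Fin N) (C : M₂) :
    (pauliAt N i A * pauliAt N (i + 1) B * pauliAt N k C).trace = 0 := by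
  have hi := Fin.add_one_ne_self hN i
  rw [pauliAt_mul_pauliAt, pauliAt_eq_tensorOp, tensorOp_mul_tensorOp, trace_tensorOp]
  by_cases hki : k = i
  · exact Finset.prod_eq_zero (Finset.mem_univ (i + 1)) (by simp [hki, hi, hB])
  · exact Finset.prod_eq_zero (Finset.mem_univ i) (by simp [hi.symm, Ne.symm hki, hA])

lemma trace_pauliAt_pair_mul_pauliAt_pair (hN : 3 ≤ N) {A B : M₂} (hA : A.trace = 0)
    (hB : B.trace = 0) (i k : Fin N) (C D : M₂) :
    (pauliAt N i A * pauliAt N (i + 1) B * (pauliAt N k C * pauliAt N (k + 1) D)).trace =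
      if k = i then (A * C).trace * (B * D).trace * 2 ^ (N - 2) else 0 := by
  have hi := Fin.add_one_ne_self (by omega) i
  split_ifs with hki
  · subst hki
    rw [← trace_pauliAt_mul_pauliAt hi.symm, ← pauliAt_mul_pauliAt_self, ← pauliAt_mul_pauliAt_self,
      mul_assoc, ← mul_assoc (pauliAt N (k + 1) B), (pauliAt_commute hi B C).eq]
    simp only [mul_assoc]
  · rw [pauliAt_mul_pauliAt, pauliAt_mul_pauliAt, tensorOp_mul_tensorOp, trace_tensorOp]
    -- some site of `{i, i + 1}` lies outside `{k, k + 1}` and carries a lone traceless factor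
    by_cases hik : i = k + 1
    · have hk2 : i + 1 ≠ k := by rw [hik]; exact Fin.add_one_add_one_ne_self hN k
      have hk1 : i + 1 ≠ k + 1 := fun h => hki (add_right_cancel h).symm
      exact Finset.prod_eq_zero (Finset.mem_univ (i + 1)) (by simp [hi, hk2, hk1, hB])
    · exact Finset.prod_eq_zero (Finset.mem_univ i) (by simp [hi.symm, Ne.symm hki, hik, hA])

lemma trace_pauliAt_pair_mul_xyzHamiltonian (hN : 3 ≤ N) {A B : M₂} (hA : A.trace = 0)
    (hB : B.trace = 0) (i : Fin N) (JX JY JZ hX hY hZ : ℝ) :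
    (pauliAt N i A * pauliAt N (i + 1) B * xyzHamiltonian N JX JY JZ hX hY hZ).trace =
      bondPairing JX JY JZ A B * 2 ^ (N - 2) := by
  simp only [xyzHamiltonian, Matrix.mul_sum, Matrix.trace_sum, Matrix.mul_add, Matrix.mul_smul,
    Matrix.trace_add, Matrix.trace_smul, trace_pauliAt_pair_mul_pauliAt_pair hN hA hB,
    trace_pauliAt_pair_mul_pauliAt (by omega : 2 ≤ N) hA hB, smul_eq_mul, mul_ite, mul_zero,
    ite_add_ite, add_zero, Finset.sum_ite_eq', Finset.mem_univ, if_true, bondPairing]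
  ring

lemma bondCommutatorTrace_eq_zero (hN : 3 ≤ N) (JX JY JZ hX hY hZ : ℝ) (q : Fin N → M₂)
    (hcomm : Commute (∑ j, pauliAt N j (q j)) (xyzHamiltonian N JX JY JZ hX hY hZ))
    {P R : M₂} (hP : P.trace = 0) (hR : R.trace = 0) (i : Fin N) :
    bondCommutatorTrace JX JY JZ (q i) (q (i + 1)) P R = 0 := by
  set Q := ∑ j, pauliAt N j (q j)
  set H := xyzHamiltonian N JX JY JZ hX hY hZ
  set T := pauliAt N i P * pauliAt N (i + 1) R
  have hTQ : T * Q - Q * T = pauliAt N i (P * q i - q i * P) * pauliAt N (i + 1) R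
      + pauliAt N i P * pauliAt N (i + 1) (R * q (i + 1) - q (i + 1) * R) := by
    rw [← pauliAt_mul_sum_sub_sum_mul, ← pauliAt_mul_sum_sub_sum_mul]
    simp only [T, Q]
    noncomm_ring
  have htrace : ((T * Q - Q * T) * H).trace = 0 := by
    rw [sub_mul, Matrix.trace_sub, mul_assoc, hcomm.eq, ← mul_assoc,
      Matrix.trace_mul_comm (T * H) Q, ← mul_assoc, sub_self]
  have htraceless (A B : M₂) : (A * B - B * A).trace = 0 := by
    rw [Matrix.trace_sub, Matrix.trace_mul_comm, sub_self]
  rw [hTQ, add_mul, Matrix.trace_add,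
    trace_pauliAt_pair_mul_xyzHamiltonian hN (htraceless _ _) hR,
    trace_pauliAt_pair_mul_xyzHamiltonian hN hP (htraceless _ _), ← add_mul] at htrace
  exact (mul_eq_zero.1 htrace).resolve_right (pow_ne_zero _ two_ne_zero)

lemma xyz_coupling_relations (hN : 3 ≤ N) (JX JY JZ hX hY hZ : ℝ) (a b c : Fin N → ℝ)
    (hcomm : Commute (∑ j, pauliAt N j (pauliDot (a j) (b j) (c j)))
      (xyzHamiltonian N JX JY JZ hX hY hZ)) (i : Fin N) :
    JY * a i = JZ * a (i + 1) ∧ JY * a (i + 1) = JZ * a i ∧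
    JZ * b i = JX * b (i + 1) ∧ JZ * b (i + 1) = JX * b i ∧
    JX * c i = JY * c (i + 1) ∧ JX * c (i + 1) = JY * c i := by
  have hzero {P R : M₂} (hP : P.trace = 0) (hR : R.trace = 0) :=
    bondCommutatorTrace_eq_zero hN JX JY JZ hX hY hZ _ hcomm hP hR i
  have of_complex {x y : ℝ} (h : 8 * I * ((x : ℂ) - y) = 0) : x = y := by
    have := (mul_eq_zero.1 h).resolve_left (by simp [I_ne_zero])
    exact_mod_cast sub_eq_zero.1 this
  obtain ⟨hyz, hzy, hzx, hxz, hxy, hyx⟩ := bondCommutatorTrace_pauliDot JX JY JZ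
    (a i) (b i) (c i) (a (i + 1)) (b (i + 1)) (c (i + 1))
  exact ⟨of_complex (hzy ▸ hzero trace_σz trace_σy), of_complex (hyz ▸ hzero trace_σy trace_σz),
    of_complex (hxz ▸ hzero trace_σx trace_σz), of_complex (hzx ▸ hzero trace_σz trace_σx),
    of_complex (hyx ▸ hzero trace_σy trace_σx), of_complex (hxy ▸ hzero trace_σx trace_σy)⟩

end NearestNeighbour

lemma eq_zero_of_mul_eq_mul_of_abs_ne {u v x y : ℝ} (h₁ : u * x = v * y) (h₂ : u * y = v * x)
    (huv : |u| ≠ |v|) : x = 0 := by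
  have h : (u ^ 2 - v ^ 2) * x = 0 := by linear_combination u * h₁ + v * h₂
  exact (mul_eq_zero.1 h).resolve_left
    (sub_ne_zero.2 fun h => huv ((sq_eq_sq_iff_abs_eq_abs u v).1 h))

theorem rank3_distinct_couplings_no_one_support_conserved_general
    (N : ℕ) [NeZero N] (hN : 3 ≤ N) (JX JY JZ hX hY hZ : ℝ)
    (hXY : |JX| ≠ |JY|) (hYZ : |JY| ≠ |JZ|) (hZX : |JZ| ≠ |JX|)
    (a b c : Fin N → ℝ)
    (H : Matrix (Fin N → Fin 2) (Fin N → Fin 2) ℂ)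
    (hH : H = ∑ i : Fin N,
      ((JX : ℂ) • (pauliAt N i σx * pauliAt N (i + 1) σx)
        + (JY : ℂ) • (pauliAt N i σy * pauliAt N (i + 1) σy)
        + (JZ : ℂ) • (pauliAt N i σz * pauliAt N (i + 1) σz)
        + (hX : ℂ) • pauliAt N i σx + (hY : ℂ) • pauliAt N i σy
        + (hZ : ℂ) • pauliAt N i σz))
    (Q : Matrix (Fin N → Fin 2) (Fin N → Fin 2) ℂ)
    (hQ : Q = ∑ i : Fin N,
      ((a i : ℂ) • pauliAt N i σx + (b i : ℂ) • pauliAt N i σy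
        + (c i : ℂ) • pauliAt N i σz))
    (hcomm : Q * H = H * Q) :
    ∀ i : Fin N, a i = 0 ∧ b i = 0 ∧ c i = 0 := by
  intro i
  rw [hQ, sum_smul_pauliAt_eq_sum_pauliAt_pauliDot] at hcomm
  subst hH
  obtain ⟨ha₁, ha₂, hb₁, hb₂, hc₁, hc₂⟩ :=
    xyz_coupling_relations hN JX JY JZ hX hY hZ a b c hcomm i
  exact ⟨eq_zero_of_mul_eq_mul_of_abs_ne ha₁ ha₂ hYZ, eq_zero_of_mul_eq_mul_of_abs_ne hb₁ hb₂ hZX,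
    eq_zero_of_mul_eq_mul_of_abs_ne hc₁ hc₂ hXY⟩

theorem rank3_distinct_couplings_no_one_support_conserved
    (N : ℕ) [NeZero N] (hN : 3 ≤ N) (JX JY JZ hX hY hZ : ℝ)
    (hJX : JX ≠ 0) (hJY : JY ≠ 0) (hJZ : JZ ≠ 0)
    (hXY : |JX| ≠ |JY|) (hYZ : |JY| ≠ |JZ|) (hZX : |JZ| ≠ |JX|)
    (a b c : Fin N → ℝ)
    (H : Matrix (Fin N → Fin 2) (Fin N → Fin 2) ℂ)
    (hH : H = ∑ i : Fin N,
      ((JX : ℂ) • (pauliAt N i σx * pauliAt N (i + 1) σx)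
        + (JY : ℂ) • (pauliAt N i σy * pauliAt N (i + 1) σy)
        + (JZ : ℂ) • (pauliAt N i σz * pauliAt N (i + 1) σz)
        + (hX : ℂ) • pauliAt N i σx + (hY : ℂ) • pauliAt N i σy
        + (hZ : ℂ) • pauliAt N i σz))
    (Q : Matrix (Fin N → Fin 2) (Fin N → Fin 2) ℂ)
    (hQ : Q = ∑ i : Fin N,
      ((a i : ℂ) • pauliAt N i σx + (b i : ℂ) • pauliAt N i σy
        + (c i : ℂ) • pauliAt N i σz))
    (hcomm : Q * H = H * Q) :
    ∀ i : Fin N, a i = 0 ∧ b i = 0 ∧ c i = 0 :=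
  rank3_distinct_couplings_no_one_support_conserved_general N hN JX JY JZ hX hY hZ hXY hYZ hZX a b c
    H hH Q hQ hcomm
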